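/- arXiv:2511.14353 — 2 statements merged into one kernel-verified Lean document; each statement's English description precedes it below -/
import Mathlib

section
/- Suppose f : (0,1) → ℝ satisfies f(t) = t(1−t)S(t)·D where D > 0 and S(t) = (γ/t)²·1_{t>γ} + ((1−γ)/(1−t))²·1_{t≤γ} for a fixed γ ∈ (0,1). Then for all t ∈ (0,1), |γ(1−γ)D − f(t)| ≥ |γ − t|·min(γ, 1−γ)·D. -/
theorem stmt9 (γ D : ℝ) (hγ : γ ∈ Set.Ioo (0:ℝ) 1) (hD : 0 < D) (f : ℝ → ℝ)
    (hf : ∀ t, f t = t * (1-t) *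
      (if γ < t then (γ/t)^2 else ((1-γ)/(1-t))^2) * D) :
    ∀ t ∈ Set.Ioo (0:ℝ) 1, |γ*(1-γ)*D - f t| ≥ |γ - t| * min γ (1-γ) * D := by
  obtain ⟨hγ0, hγ1⟩ := hγ
  rintro t ⟨ht0, ht1⟩
  rw [hf]
  split_ifs with h
  · have hmin : min γ (1-γ) ≤ γ := min_le_left _ _
    have key : γ*(1-γ)*D - t*(1-t)*((γ/t)^2)*D = γ*D*(t-γ)/t := by
      field_simp; ring
    have hnum : (0:ℝ) ≤ γ*D*(t-γ) := mul_nonneg (mul_nonneg hγ0.le hD.le) (by linarith)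
    rw [key, abs_of_nonneg (div_nonneg hnum ht0.le), abs_of_nonpos (by linarith),
      ge_iff_le, le_div_iff₀ ht0]
    have hx : (0:ℝ) ≤ (t-γ)*D*t := mul_nonneg (mul_nonneg (by linarith) hD.le) ht0.le
    have h1 := mul_le_mul_of_nonneg_left hmin hx
    have h2 : (0:ℝ) ≤ (t-γ)*D*γ*(1-t) := mul_nonneg (mul_nonneg (mul_nonneg (by linarith) hD.le) hγ0.le) (by linarith)
    nlinarith [h1, h2]
  · push_neg at h
    have hmin : min γ (1-γ) ≤ 1-γ := min_le_right _ _
    have h1t : 0 < 1 - t := by linarith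
    have key : γ*(1-γ)*D - t*(1-t)*(((1-γ)/(1-t))^2)*D = (1-γ)*D*(γ-t)/(1-t) := by
      field_simp; ring
    have hnum : (0:ℝ) ≤ (1-γ)*D*(γ-t) := mul_nonneg (mul_nonneg (by linarith) hD.le) (by linarith)
    rw [key, abs_of_nonneg (div_nonneg hnum h1t.le), abs_of_nonneg (by linarith),
      ge_iff_le, le_div_iff₀ h1t]
    have hx : (0:ℝ) ≤ (γ-t)*D*(1-t) := mul_nonneg (mul_nonneg (by linarith) hD.le) h1t.le
    have h1 := mul_le_mul_of_nonneg_left hmin hx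
    have h2 : (0:ℝ) ≤ (γ-t)*D*(1-γ)*t := mul_nonneg (mul_nonneg (mul_nonneg (by linarith) hD.le) (by linarith)) ht0.le
    nlinarith [h1, h2]
end

section
/- Let W be a hypergeometric random variable with parameters (n, m, K) (population size n, m draws, K successes), and let ε > 0. Then P(|W/m − K/n| > ε) ≤ 2·exp(−2mε²). -/
/-!
Chernoff's method: it suffices to show that `W - m K / n` has a sub-Gaussian moment generating
function with variance proxy `m / 4`, as a sum of `m` independent Bernoulli(`K / n`) variables
would. Writing `p = K / n`, the generating function `E[z ^ W]` equals `e_m(x) / C(n, m)`, where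
`x` consists of `K` copies of `z` and `n - K` ones. Maclaurin's inequality bounds this by the
`m`-th power of the mean of `x`, which is the Bernoulli generating function `1 - p + p z`, and
Hoeffding's lemma for a single Bernoulli variable bounds `1 - p + p e^t` by `exp (t p + t² / 8)`.
-/

open Finset MeasureTheory ProbabilityTheory Real

section CommSemiring

variable {R : Type*} [CommSemiring R]

@[simp]
lemma Multiset.esymm_zero (s : Multiset R) : s.esymm 0 = 1 := by
  simp [esymm]

@[simp]
lemma Multiset.esymm_empty_succ (k : ℕ) : (0 : Multiset R).esymm (k + 1) = 0 := by
  simp [esymm, powersetCard_zero_right]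

lemma Multiset.esymm_cons_succ (a : R) (s : Multiset R) (k : ℕ) :
    (a ::ₘ s).esymm (k + 1) = s.esymm (k + 1) + a * s.esymm k := by
  simp [esymm, powersetCard_cons, sum_map_mul_left]

lemma Multiset.esymm_add (s t : Multiset R) (k : ℕ) :
    (s + t).esymm k = ∑ i ∈ Finset.range (k + 1), s.esymm i * t.esymm (k - i) := by
  induction s using Multiset.induction_on generalizing k with
  | empty => rw [Finset.sum_range_succ']; cases k <;> simp
  | cons a s ih =>
    cases k with
    | zero => simp
    | succ k =>
      rw [cons_add, esymm_cons_succ, ih, ih, Finset.sum_range_succ' _ (k + 1),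
        Finset.sum_range_succ' _ (k + 1)]
      simp only [esymm_cons_succ, esymm_zero, Nat.succ_sub_succ, add_mul, Finset.sum_add_distrib,
        Finset.mul_sum, mul_assoc]
      ring

lemma Multiset.esymm_replicate (n k : ℕ) (a : R) :
    (replicate n a).esymm k = n.choose k * a ^ k := by
  induction n generalizing k with
  | zero => cases k <;> simp
  | succ n ih =>
    cases k with
    | zero => simp
    | succ k =>
      rw [replicate_succ, esymm_cons_succ, ih, ih, Nat.choose_succ_succ']
      push_cast
      ring

lemma Multiset.esymm_nonneg [PartialOrder R] [IsOrderedRing R] {s : Multiset R}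
    (hs : ∀ x ∈ s, 0 ≤ x) (k : ℕ) : 0 ≤ s.esymm k :=
  sum_nonneg fun _ hy => by
    obtain ⟨t, ht, rfl⟩ := mem_map.1 hy
    exact prod_nonneg fun x hx => hs x (mem_of_le (mem_powersetCard.1 ht).1 hx)

end CommSemiring

section OrderedRing

variable {R : Type*} [CommRing R] [LinearOrder R] [IsStrictOrderedRing R]

/-- Replacing `a ≤ c ≤ b` by `c` and `a + b - c` keeps the sum and does not decrease the
product `a * b`, since `c * (a + b - c) - a * b = (c - a) * (b - c)`. -/
lemma Multiset.esymm_cons_cons_le {a b c : R} {r : Multiset R} (hr : ∀ x ∈ r, 0 ≤ x)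
    (hac : a ≤ c) (hcb : c ≤ b) (k : ℕ) :
    (a ::ₘ b ::ₘ r).esymm k ≤ (c ::ₘ (a + b - c) ::ₘ r).esymm k := by
  rcases k with _ | _ | k
  · simp
  · simp only [esymm_cons_succ, esymm_zero]
    linarith
  · simp only [esymm_cons_succ]
    nlinarith [mul_nonneg (mul_nonneg (sub_nonneg.2 hac) (sub_nonneg.2 hcb)) (esymm_nonneg hr k)]

lemma Multiset.exists_le_of_sum_le_card_mul {s : Multiset R} {μ : R} (hs : s ≠ 0)
    (h : s.sum ≤ card s * μ) : ∃ a ∈ s, a ≤ μ := by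
  contrapose! h
  simpa using sum_lt_sum_of_nonempty hs (f := fun _ => μ) (g := id) h

lemma Multiset.exists_ge_of_card_mul_le_sum {s : Multiset R} {μ : R} (hs : s ≠ 0)
    (h : card s * μ ≤ s.sum) : ∃ b ∈ s, μ ≤ b := by
  contrapose! h
  simpa using sum_lt_sum_of_nonempty hs (f := id) (g := fun _ => μ) h

lemma Multiset.exists_esymm_le_esymm_cons {s : Multiset R} {μ : R} (hs : ∀ x ∈ s, 0 ≤ x)
    (hsum : s.sum = card s * μ) (hne : s ≠ 0) :
    ∃ t : Multiset R, card t + 1 = card s ∧ (∀ x ∈ t, 0 ≤ x) ∧ t.sum = card t * μ ∧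
      ∀ k, s.esymm k ≤ (μ ::ₘ t).esymm k := by
  obtain ⟨a, ha, haμ⟩ := exists_le_of_sum_le_card_mul hne hsum.le
  rw [← cons_erase ha] at hs hsum hne ⊢
  set r := s.erase a
  simp only [sum_cons, card_cons, Nat.cast_succ] at hsum
  rcases eq_or_ne r 0 with hr | hr
  · simp only [hr, sum_zero, card_zero, Nat.cast_zero, zero_add, add_zero, one_mul] at hsum
    refine ⟨0, by simp [hr], by simp, by simp, fun k => by rw [hr, hsum]⟩
  obtain ⟨b, hb, hμb⟩ := exists_ge_of_card_mul_le_sum (μ := μ) hr (by linarith)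
  rw [← cons_erase hb] at hs hsum ⊢
  have hq : ∀ x ∈ r.erase b, 0 ≤ x := fun x hx => hs x (by simp [hx])
  refine ⟨(a + b - μ) ::ₘ r.erase b, by simp, ?_, ?_, esymm_cons_cons_le hq haμ hμb⟩
  · simp only [mem_cons, forall_eq_or_imp]
    exact ⟨by linarith [hs a (by simp)], hq⟩
  · simp only [sum_cons, card_cons, Nat.cast_succ] at hsum ⊢
    linarith

/-- **Maclaurin's inequality** `e_k(s) ≤ C(N, k) * (e_1(s) / N) ^ k` for nonnegative `s` with
`N` elements; the mean is passed as `μ` with `s.sum = N * μ`, so that no division occurs. -/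
theorem Multiset.esymm_le_choose_mul_pow {s : Multiset R} {μ : R} (hs : ∀ x ∈ s, 0 ≤ x)
    (hsum : s.sum = card s * μ) (k : ℕ) : s.esymm k ≤ (card s).choose k * μ ^ k := by
  induction hN : card s generalizing s k with
  | zero => rcases k with _ | k <;> simp [card_eq_zero.1 hN]
  | succ N ih =>
    have hne : s ≠ 0 := by rintro rfl; simp at hN
    have hμ : 0 ≤ μ := by
      have := sum_nonneg hs
      rw [hsum, hN] at this
      exact nonneg_of_mul_nonneg_right this (by positivity)
    obtain ⟨t, hcard, ht, htsum, hst⟩ := exists_esymm_le_esymm_cons hs hsum hne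
    have htN : card t = N := by omega
    refine (hst k).trans ?_
    rcases k with _ | k
    · simp
    rw [esymm_cons_succ, Nat.choose_succ_succ', Nat.cast_add]
    calc t.esymm (k + 1) + μ * t.esymm k
        ≤ N.choose (k + 1) * μ ^ (k + 1) + μ * (N.choose k * μ ^ k) := by
          gcongr <;> exact ih ht htsum _ htN
      _ = (N.choose k + N.choose (k + 1) : R) * μ ^ (k + 1) := by ring

end OrderedRing

lemma one_sub_add_mul_exp_le {p : ℝ} (hp0 : 0 ≤ p) (hp1 : p ≤ 1) (t : ℝ) :
    1 - p + p * exp t ≤ exp (t * p + t ^ 2 / 8) := by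
  set ν := bernoulliMeasure (1 : ℝ) 0 ⟨p, hp0, hp1⟩
  have hbound : ∀ᵐ x ∂ν, id x ∈ Set.Icc (0 : ℝ) 1 := by
    rw [ae_iff]
    exact bernoulliMeasure_apply_of_notMem_of_notMem _ (by measurability) (by simp) (by simp)
  have hoeffding := (hasSubgaussianMGF_of_mem_Icc aemeasurable_id hbound).mgf_le t
  norm_num [mgf, integral_bernoulliMeasure, ν] at hoeffding
  calc 1 - p + p * exp t = exp (t * p) * (p * exp (t * (1 - p)) + (1 - p) * exp (-(t * p))) := by
        rw [mul_one_sub, sub_eq_add_neg t, exp_add, exp_neg]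
        field_simp
        ring
    _ ≤ exp (t * p) * exp (t ^ 2 / 8) := by
        gcongr
        exact hoeffding.trans_eq (by ring_nf)
    _ = exp (t * p + t ^ 2 / 8) := (exp_add _ _).symm

lemma sum_choose_mul_choose_mul_pow_le {n K : ℕ} (hK : K ≤ n) {p : ℝ} (hp : n * p = K) (m : ℕ)
    {z : ℝ} (hz : 0 ≤ z) :
    ∑ w ∈ range (m + 1), (K.choose w * (n - K).choose (m - w) : ℝ) * z ^ w
      ≤ n.choose m * (1 - p + p * z) ^ m := by
  set s := Multiset.replicate K z + Multiset.replicate (n - K) 1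
  have hs : ∀ x ∈ s, 0 ≤ x := by
    simp only [s, Multiset.mem_add, Multiset.mem_replicate]
    rintro x (⟨-, rfl⟩ | ⟨-, rfl⟩) <;> positivity
  have hcard : Multiset.card s = n := by simp [s]; omega
  have hsum : s.sum = Multiset.card s * (1 - p + p * z) := by
    simp [s, hcard, Nat.cast_sub hK, ← hp]
    ring
  have hesymm :
      s.esymm m = ∑ w ∈ range (m + 1), (K.choose w * (n - K).choose (m - w) : ℝ) * z ^ w := by
    simp only [s, Multiset.esymm_add, Multiset.esymm_replicate, one_pow, mul_one]
    exact sum_congr rfl fun w _ => by ring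
  simpa [hesymm, hcard] using Multiset.esymm_le_choose_mul_pow hs hsum m

lemma integral_comp_eq_sum_range {Ω : Type*} [MeasurableSpace Ω] {μ : Measure Ω}
    [IsFiniteMeasure μ] {W : Ω → ℕ} (hW : Measurable W) {m : ℕ} (hWm : ∀ᵐ ω ∂μ, W ω ≤ m)
    (g : ℕ → ℝ) : ∫ ω, g (W ω) ∂μ = ∑ w ∈ range (m + 1), μ.real {ω | W ω = w} * g w := by
  have hsplit : (fun ω => g (W ω)) =ᵐ[μ]
      fun ω => ∑ w ∈ range (m + 1), {ω | W ω = w}.indicator (fun _ => g w) ω := by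
    filter_upwards [hWm] with ω hω
    simp [Set.indicator, Nat.lt_succ_of_le hω]
  have hmeas (w : ℕ) : MeasurableSet {ω | W ω = w} := hW (measurableSet_singleton w)
  have hint (w : ℕ) : Integrable ({ω | W ω = w}.indicator fun _ => g w) μ :=
    (integrable_const _).indicator (hmeas w)
  rw [integral_congr_ae hsplit, integral_finsetSum _ fun w _ => hint w]
  refine sum_congr rfl fun w _ => ?_
  rw [integral_indicator_const _ (hmeas w), smul_eq_mul]

lemma hasSubgaussianMGF_of_hypergeometric {Ω : Type*} [MeasurableSpace Ω] {μ : Measure Ω}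
    [IsProbabilityMeasure μ] {n m K : ℕ} (hmn : m ≤ n) (hK : K ≤ n) {W : Ω → ℕ}
    (hW : Measurable W) (hWm : ∀ᵐ ω ∂μ, W ω ≤ m)
    (hdist : ∀ w ≤ m, μ {ω | W ω = w} =
      ENNReal.ofReal ((K.choose w * (n - K).choose (m - w) : ℕ) / (n.choose m : ℝ))) :
    HasSubgaussianMGF (fun ω => (W ω : ℝ) - m * (K / n)) (m / 4) μ where
  integrable_exp_mul t := by
    refine integrable_exp_mul_of_mem_Icc (a := -(m * (K / n))) (b := m - m * (K / n))
      (by fun_prop) ?_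
    filter_upwards [hWm] with ω hω
    constructor <;> simp [hω]
  mgf_le t := by
    set p : ℝ := K / n
    have hp : n * p = K := by
      rcases eq_or_ne n 0 with hn | hn
      · simp [p, hn, Nat.le_zero.1 (hn ▸ hK)]
      · exact mul_div_cancel₀ _ (by exact_mod_cast hn)
    have hp0 : 0 ≤ p := by positivity
    have hp1 : p ≤ 1 := div_le_one_of_le₀ (by exact_mod_cast hK) (by positivity)
    have hchoose : (0 : ℝ) < n.choose m := by exact_mod_cast Nat.choose_pos hmn
    calc mgf (fun ω => (W ω : ℝ) - m * p) μ t
        = ∑ w ∈ range (m + 1), μ.real {ω | W ω = w} * exp (t * (w - m * p)) :=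
          integral_comp_eq_sum_range hW hWm fun w => exp (t * (w - m * p))
      _ = exp (-(t * m * p)) *
            ((∑ w ∈ range (m + 1), (K.choose w * (n - K).choose (m - w) : ℝ) * exp t ^ w) /
              n.choose m) := by
          rw [sum_div, mul_sum]
          refine sum_congr rfl fun w hw => ?_
          rw [measureReal_def, hdist w (Nat.lt_succ_iff.1 (mem_range.1 hw)),
            ENNReal.toReal_ofReal (by positivity), ← exp_nat_mul, mul_sub, sub_eq_neg_add,
            exp_add]
          push_cast
          ring_nf
      _ ≤ exp (-(t * m * p)) * (1 - p + p * exp t) ^ m := by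
          gcongr
          rw [div_le_iff₀ hchoose, mul_comm]
          exact sum_choose_mul_choose_mul_pow_le hK hp m (exp_pos t).le
      _ ≤ exp (-(t * m * p)) * exp (t * p + t ^ 2 / 8) ^ m := by
          gcongr
          exact one_sub_add_mul_exp_le hp0 hp1 t
      _ = exp (((m / 4 : NNReal) : ℝ) * t ^ 2 / 2) := by
          rw [← exp_nat_mul, ← exp_add]
          push_cast
          ring_nf

lemma ae_le_of_measure_eq_zero_of_lt {Ω : Type*} [MeasurableSpace Ω] {μ : Measure Ω}
    {W : Ω → ℕ} {m : ℕ} (h : ∀ w, m < w → μ {ω | W ω = w} = 0) : ∀ᵐ ω ∂μ, W ω ≤ m := by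
  have hcover : {ω | ¬W ω ≤ m} ⊆ ⋃ (w) (_ : m < w), {ω | W ω = w} :=
    fun ω hω => Set.mem_iUnion₂.2 ⟨W ω, not_le.1 hω, rfl⟩
  exact ae_iff.2 <| measure_mono_null hcover <|
    measure_iUnion_null fun w => measure_iUnion_null fun hw => h w hw

theorem stmt12 {Ω : Type*} [MeasurableSpace Ω] (μ : Measure Ω) [IsProbabilityMeasure μ]
    (n m K : ℕ) (hm : 0 < m) (hmn : m ≤ n) (hK : K ≤ n)
    (W : Ω → ℕ) (hW : Measurable W)
    (hdist : ∀ w ≤ m, μ {ω | W ω = w} =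
      ENNReal.ofReal ((K.choose w * (n - K).choose (m - w) : ℕ) / (n.choose m : ℝ)))
    (hdist' : ∀ w, m < w → μ {ω | W ω = w} = 0)
    (ε : ℝ) (hε : 0 < ε) :
    (μ {ω | ε < |(W ω : ℝ)/m - (K:ℝ)/n|}).toReal ≤ 2 * Real.exp (-2*m*ε^2) := by
  have hX := hasSubgaussianMGF_of_hypergeometric hmn hK hW
    (ae_le_of_measure_eq_zero_of_lt hdist') hdist
  have hmR : (0 : ℝ) < m := by exact_mod_cast hm
  have hmε : 0 ≤ m * ε := by positivity
  have hsub : {ω | ε < |(W ω : ℝ) / m - K / n|} ⊆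
      {ω | m * ε ≤ (W ω : ℝ) - m * (K / n)} ∪ {ω | m * ε ≤ -((W ω : ℝ) - m * (K / n))} := by
    intro ω hω
    have hdev : m * ε < |(W ω : ℝ) - m * (K / n)| := by
      rw [show (W ω : ℝ) - m * (K / n) = m * ((W ω : ℝ) / m - K / n) by field_simp, abs_mul,
        abs_of_pos hmR]
      exact mul_lt_mul_of_pos_left hω hmR
    rcases lt_abs.1 hdev with h | h
    · exact Or.inl h.le
    · exact Or.inr h.le
  have htail : exp (-(m * ε) ^ 2 / (2 * ((m / 4 : NNReal) : ℝ))) = exp (-2 * m * ε ^ 2) := by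
    congr 1
    push_cast
    field_simp
    ring
  calc (μ {ω | ε < |(W ω : ℝ) / m - K / n|}).toReal
      ≤ μ.real {ω | m * ε ≤ (W ω : ℝ) - m * (K / n)}
        + μ.real {ω | m * ε ≤ -((W ω : ℝ) - m * (K / n))} :=
        (measureReal_mono hsub).trans (measureReal_union_le _ _)
    _ ≤ exp (-(m * ε) ^ 2 / (2 * ((m / 4 : NNReal) : ℝ)))
        + exp (-(m * ε) ^ 2 / (2 * ((m / 4 : NNReal) : ℝ))) :=
        add_le_add (hX.measure_ge_le hmε) (hX.neg.measure_ge_le hmε)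
    _ = 2 * exp (-2 * m * ε ^ 2) := by rw [htail]; ring
end
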